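/- arXiv:2403.17019 — 2 statements merged into one kernel-verified Lean document; each statement's English description precedes it below -/
import Mathlib

section
/- A two-variable quaternionic slice regular polynomial P vanishes at every point (q₁, b) with q₁ ∈ ℍ if and only if P = (q₂ - b) * P₂ for some P₂ ∈ ℍ[q₁,q₂]. -/
/-- Two-variable quaternionic polynomials `Σ q₁ⁿ q₂ᵐ a_{n,m}`, encoded as polynomials in `q₁`
whose coefficients are polynomials in `q₂`; polynomial multiplication is exactly the
double-convolution `*`-product. -/
abbrev Poly2 : Type := Polynomial (Polynomial (Quaternion ℝ))

/-- Evaluation of a one-variable quaternionic polynomial `Σ qⁿ aₙ` at `q`. -/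
noncomputable def qeval (f : Polynomial (Quaternion ℝ)) (q : Quaternion ℝ) : Quaternion ℝ :=
  f.sum fun n a => q ^ n * a

/-- Evaluation of `P = Σ q₁ⁿ q₂ᵐ a_{n,m}` at a point `(a,b)`:  `Σ aⁿ bᵐ a_{n,m}`. -/
noncomputable def evalPair (P : Poly2) (a b : Quaternion ℝ) : Quaternion ℝ :=
  P.sum fun n p => a ^ n * qeval p b

/-- Regular conjugate of a one-variable quaternionic polynomial. -/
noncomputable def qconj (f : Polynomial (Quaternion ℝ)) : Polynomial (Quaternion ℝ) :=
  ∑ n ∈ f.support, Polynomial.monomial n (star (f.coeff n))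

/-- Regular conjugate `P^c` of a two-variable quaternionic polynomial. -/
noncomputable def conj2 (P : Poly2) : Poly2 :=
  ∑ n ∈ P.support, Polynomial.monomial n (qconj (P.coeff n))

/-- Symmetrization `P^s = P * P^c` of a two-variable quaternionic polynomial. -/
noncomputable def sym2 (P : Poly2) : Poly2 := P * conj2 P

/-!
Evaluating the second variable at `b` turns `P` into the one-variable polynomial
`Σ q₁ⁿ P_n(b)`. It vanishes on all of `ℍ`, in particular on the real line, where it is
componentwise a real polynomial, so it is zero: every coefficient `P_n ∈ ℍ[q₂]` vanishes at `b`.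
Since `q₂` is central, dividing on the left by the monic `q₂ - b` leaves the remainder `P_n(b)`,
so `P_n = (q₂ - b) g_n`, and `P = (q₂ - b) * Σ q₁ⁿ g_n`.
-/

open Polynomial

lemma Polynomial.coeff_sum_monomial {R S : Type*} [Semiring R] [Semiring S] (p : R[X])
    {g : R → S} (hg : g 0 = 0) (n : ℕ) :
    (p.sum fun k a => monomial k (g a)).coeff n = g (p.coeff n) := by
  rw [Polynomial.sum_def, finsetSum_coeff]
  simp only [coeff_monomial, Finset.sum_ite_eq']
  split_ifs with hn
  · rfl
  · rw [notMem_support_iff.mp hn, hg]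

theorem Polynomial.eq_zero_of_eval_algebraMap_eq_zero {K A : Type*} [Field K] [Infinite K]
    [Ring A] [Algebra K A] {f : A[X]} (h : ∀ r : K, f.eval (algebraMap K A r) = 0) : f = 0 := by
  ext n
  rw [coeff_zero, ← Module.forall_dual_apply_eq_zero_iff K]
  intro φ
  -- `φ` applied to the coefficients gives a polynomial over `K` that vanishes on all of `K`
  have hφ : (f.sum fun k a => monomial k (φ a)) = 0 := Polynomial.funext fun r => by
    simp only [Polynomial.sum_def, eval_finsetSum, eval_monomial]
    rw [eval_zero, ← φ.map_zero, ← h r, eval_eq_sum, Polynomial.sum_def, map_sum]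
    refine Finset.sum_congr rfl fun m _ => ?_
    rw [← map_pow, ← Algebra.commutes, ← Algebra.smul_def, map_smul, smul_eq_mul, mul_comm]
  rw [← coeff_sum_monomial f φ.map_zero, hφ, coeff_zero]

noncomputable def qevalAddHom (q : Quaternion ℝ) : (Quaternion ℝ)[X] →+ Quaternion ℝ where
  toFun f := qeval f q
  map_zero' := sum_zero_index _
  map_add' f g := sum_add_index f g _ (fun _ => mul_zero _) fun _ _ _ => mul_add _ _ _

@[simp]
lemma qevalAddHom_apply (q : Quaternion ℝ) (f : (Quaternion ℝ)[X]) :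
    qevalAddHom q f = qeval f q := rfl

lemma qeval_zero (q : Quaternion ℝ) : qeval 0 q = 0 := map_zero (qevalAddHom q)

lemma qeval_add (f g : (Quaternion ℝ)[X]) (q : Quaternion ℝ) :
    qeval (f + g) q = qeval f q + qeval g q := map_add (qevalAddHom q) f g

lemma qeval_sub (f g : (Quaternion ℝ)[X]) (q : Quaternion ℝ) :
    qeval (f - g) q = qeval f q - qeval g q := map_sub (qevalAddHom q) f g

lemma qeval_monomial (n : ℕ) (a q : Quaternion ℝ) : qeval (monomial n a) q = q ^ n * a :=
  sum_monomial_index a _ (mul_zero _)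

lemma qeval_X_sub_C_mul (b : Quaternion ℝ) (g : (Quaternion ℝ)[X]) :
    qeval ((X - C b) * g) b = 0 := by
  induction g using Polynomial.induction_on' with
  | add p q hp hq => rw [mul_add, qeval_add, hp, hq, add_zero]
  | monomial n a =>
    rw [sub_mul, X_mul_monomial, C_mul_monomial, qeval_sub, qeval_monomial, qeval_monomial,
      pow_succ, mul_assoc, sub_self]

lemma exists_eq_X_sub_C_mul_add_C_qeval (b : Quaternion ℝ) (f : (Quaternion ℝ)[X]) :
    ∃ g, f = (X - C b) * g + C (qeval f b) := by
  induction f using Polynomial.induction_on' with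
  | add p q hp hq =>
    obtain ⟨g, hg⟩ := hp
    obtain ⟨g', hg'⟩ := hq
    refine ⟨g + g', ?_⟩
    rw [qeval_add, C_add, mul_add]
    nth_rewrite 1 [hg, hg']
    abel
  | monomial n a =>
    -- `Xⁿ - bⁿ = (X - b) * Σ Xⁱ bⁿ⁻¹⁻ⁱ`, as `X` commutes with `C b`
    refine ⟨(∑ i ∈ Finset.range n, X ^ i * C b ^ (n - 1 - i)) * C a, ?_⟩
    rw [qeval_monomial, ← mul_assoc, (commute_X (C b)).mul_geom_sum₂, sub_mul, ← map_pow,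
      ← map_mul, X_pow_mul, C_mul_X_pow_eq_monomial, sub_add_cancel]

lemma qeval_eq_zero_iff {f : (Quaternion ℝ)[X]} {b : Quaternion ℝ} :
    qeval f b = 0 ↔ X - C b ∣ f := by
  refine ⟨fun h => ?_, fun ⟨g, hg⟩ => hg ▸ qeval_X_sub_C_mul b g⟩
  obtain ⟨g, hg⟩ := exists_eq_X_sub_C_mul_add_C_qeval b f
  exact ⟨g, by rw [hg, h, map_zero, add_zero]⟩

lemma qeval_algebraMap (f : (Quaternion ℝ)[X]) (r : ℝ) :
    qeval f (algebraMap ℝ (Quaternion ℝ) r) = f.eval (algebraMap ℝ (Quaternion ℝ) r) := by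
  rw [eval_eq_sum]
  exact Finset.sum_congr rfl fun n _ => by dsimp only; rw [← map_pow, Algebra.commutes]

lemma forall_qeval_eq_zero_iff {f : (Quaternion ℝ)[X]} : (∀ q, qeval f q = 0) ↔ f = 0 := by
  refine ⟨fun h => eq_zero_of_eval_algebraMap_eq_zero (K := ℝ) fun r => ?_, fun hf q => ?_⟩
  · rw [← qeval_algebraMap, h]
  · rw [hf, qeval_zero]

noncomputable def evalSnd (P : Poly2) (b : Quaternion ℝ) : (Quaternion ℝ)[X] :=
  P.sum fun n p => monomial n (qeval p b)

lemma coeff_evalSnd (P : Poly2) (b : Quaternion ℝ) (n : ℕ) :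
    (evalSnd P b).coeff n = qeval (P.coeff n) b :=
  coeff_sum_monomial P (qeval_zero b) n

lemma evalPair_eq_qeval_evalSnd (P : Poly2) (a b : Quaternion ℝ) :
    evalPair P a b = qeval (evalSnd P b) a := by
  rw [evalSnd, Polynomial.sum, ← qevalAddHom_apply, map_sum]
  exact Finset.sum_congr rfl fun n _ => (qeval_monomial n _ a).symm

theorem vanishing_on_H_times_b_iff_left_factor (P : Poly2) (b : Quaternion ℝ) :
    (∀ q₁ : Quaternion ℝ, evalPair P q₁ b = 0) ↔
    ∃ P₂ : Poly2, P = Polynomial.C (Polynomial.X - Polynomial.C b) * P₂ := by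
  change _ ↔ C (X - C b) ∣ P
  simp_rw [evalPair_eq_qeval_evalSnd, forall_qeval_eq_zero_iff, C_dvd_iff_dvd_coeff,
    ← qeval_eq_zero_iff, ← coeff_evalSnd, Polynomial.ext_iff, coeff_zero]
end

section
/- Let P, Q be two-variable quaternionic slice regular polynomials with deg_{q₁}P = n, deg_{q₁}Q = m. Suppose there exist nonzero H, K ∈ ℍ[q₁,q₂] with deg_{q₁}H < m and deg_{q₁}K < n such that P*H + Q*K = 0. Then the symmetrized polynomials satisfy P^s * H^s = Q^s * K^s, where P^s, Q^s have real coefficients, deg_{q₁}H^s = 2 deg_{q₁}H < deg_{q₁}Q^s, and deg_{q₁}K^s = 2 deg_{q₁}K < deg_{q₁}P^s. -/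
/-!
The regular conjugation `P ↦ P^c` conjugates every quaternionic coefficient, so it is an
involutive anti-automorphism of `ℍ[q₁,q₂]`: `(P * Q)^c = Q^c * P^c`. Hence `P^s = P * P^c` is
self-conjugate, i.e. has real coefficients, and is therefore central. Centrality makes
symmetrization multiplicative, `(P * Q)^s = P * Q^s * P^c = P^s * Q^s`, and since `P^c` has the
same support as `P` and there are no zero divisors, `deg P^s = 2 deg P`. Applying `(·)^s` to
`P * H = Q * (-K)` gives the syzygy, and doubling degrees preserves the strict inequalities.
-/

open Polynomial

theorem Polynomial.commute_of_commute_coeff {R : Type*} [Semiring R] {p q : R[X]}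
    (h : ∀ i j, Commute (p.coeff i) (q.coeff j)) : Commute p q := by
  refine Polynomial.ext fun n => ?_
  rw [coeff_mul, coeff_mul, ← Finset.Nat.sum_antidiagonal_swap]
  exact Finset.sum_congr rfl fun x _ => (h x.2 x.1).eq

theorem coeff_qconj (f : Polynomial (Quaternion ℝ)) (n : ℕ) :
    (qconj f).coeff n = star (f.coeff n) := by
  rw [qconj, finsetSum_coeff, Finset.sum_eq_single n (fun _ _ h => coeff_monomial_of_ne _ h.symm)]
  · rw [coeff_monomial_same]
  · intro hn
    rw [notMem_support_iff.mp hn, star_zero, monomial_zero_right, coeff_zero]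

theorem qconj_qconj (f : Polynomial (Quaternion ℝ)) : qconj (qconj f) = f := by
  ext1 n
  rw [coeff_qconj, coeff_qconj, star_star]

theorem qconj_zero : qconj 0 = 0 := by
  ext1 n
  rw [coeff_qconj, coeff_zero, star_zero]

theorem qconj_eq_zero_iff {f : Polynomial (Quaternion ℝ)} : qconj f = 0 ↔ f = 0 :=
  ⟨fun h => by rw [← qconj_qconj f, h, qconj_zero], fun h => by rw [h, qconj_zero]⟩

theorem coeff_conj2 (P : Poly2) (n : ℕ) : (conj2 P).coeff n = qconj (P.coeff n) := by
  rw [conj2, finsetSum_coeff, Finset.sum_eq_single n (fun _ _ h => coeff_monomial_of_ne _ h.symm)]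
  · rw [coeff_monomial_same]
  · intro hn
    rw [notMem_support_iff.mp hn, coeff_monomial_same, qconj_zero]

theorem conj2_conj2 (P : Poly2) : conj2 (conj2 P) = P := by
  ext1 n
  rw [coeff_conj2, coeff_conj2, qconj_qconj]

theorem qconj_neg (f : Polynomial (Quaternion ℝ)) : qconj (-f) = -qconj f := by
  ext1 n
  rw [coeff_qconj, coeff_neg, coeff_neg, coeff_qconj, star_neg]

theorem conj2_neg (P : Poly2) : conj2 (-P) = -conj2 P := by
  ext1 n
  rw [coeff_conj2, coeff_neg, coeff_neg, coeff_conj2, qconj_neg]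

theorem qconj_sum {ι : Type*} (s : Finset ι) (F : ι → Polynomial (Quaternion ℝ)) :
    qconj (∑ i ∈ s, F i) = ∑ i ∈ s, qconj (F i) := by
  ext1 m
  simp only [coeff_qconj, finsetSum_coeff, star_sum]

theorem qconj_mul (f g : Polynomial (Quaternion ℝ)) : qconj (f * g) = qconj g * qconj f := by
  ext1 n
  rw [coeff_qconj, coeff_mul, star_sum, coeff_mul, ← Finset.Nat.sum_antidiagonal_swap]
  simp only [coeff_qconj, star_mul, Prod.fst_swap, Prod.snd_swap]

theorem conj2_mul (P Q : Poly2) : conj2 (P * Q) = conj2 Q * conj2 P := by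
  ext1 n
  rw [coeff_conj2, coeff_mul, qconj_sum, coeff_mul, ← Finset.Nat.sum_antidiagonal_swap]
  simp only [coeff_conj2, qconj_mul, Prod.fst_swap, Prod.snd_swap]

theorem support_conj2 (P : Poly2) : (conj2 P).support = P.support := by
  ext1 n
  rw [mem_support_iff, mem_support_iff, coeff_conj2, Ne, qconj_eq_zero_iff]

theorem natDegree_conj2 (P : Poly2) : (conj2 P).natDegree = P.natDegree := by
  simp only [natDegree, degree, support_conj2]

theorem conj2_ne_zero {P : Poly2} (hP : P ≠ 0) : conj2 P ≠ 0 := by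
  rwa [Ne, ← support_eq_empty, support_conj2, support_eq_empty]

theorem conj2_sym2 (P : Poly2) : conj2 (sym2 P) = sym2 P := by
  rw [sym2, conj2_mul, conj2_conj2]

theorem star_coeff_coeff_sym2 (P : Poly2) (n m : ℕ) :
    star (((sym2 P).coeff n).coeff m) = ((sym2 P).coeff n).coeff m := by
  rw [← coeff_qconj, ← coeff_conj2, conj2_sym2]

theorem exists_coeff_coeff_sym2_eq_coe (P : Poly2) (n m : ℕ) :
    ∃ r : ℝ, ((sym2 P).coeff n).coeff m = (r : Quaternion ℝ) :=
  ⟨_, Quaternion.star_eq_self.mp (star_coeff_coeff_sym2 P n m)⟩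

theorem commute_sym2 (P A : Poly2) : Commute (sym2 P) A :=
  commute_of_commute_coeff fun i _ => commute_of_commute_coeff fun j _ => by
    rw [Quaternion.star_eq_self.mp (star_coeff_coeff_sym2 P i j)]
    exact Quaternion.coe_commutes _ _

theorem sym2_mul (A B : Poly2) : sym2 (A * B) = sym2 A * sym2 B := by
  calc sym2 (A * B) = A * (sym2 B * conj2 A) := by
        rw [sym2, conj2_mul, sym2, mul_assoc, mul_assoc]
    _ = sym2 A * sym2 B := by rw [(commute_sym2 B (conj2 A)).eq, ← mul_assoc, ← sym2]

theorem sym2_neg (P : Poly2) : sym2 (-P) = sym2 P := by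
  rw [sym2, sym2, conj2_neg]
  exact neg_mul_neg P (conj2 P)

theorem natDegree_sym2 (P : Poly2) : (sym2 P).natDegree = 2 * P.natDegree := by
  rcases eq_or_ne P 0 with rfl | hP
  · simp [sym2]
  · rw [sym2, natDegree_mul hP (conj2_ne_zero hP), natDegree_conj2, two_mul]

theorem symmetrized_syzygy_general (P Q H K : Poly2)
    (hdH : H.natDegree < Q.natDegree) (hdK : K.natDegree < P.natDegree)
    (hrel : P * H + Q * K = 0) :
    sym2 P * sym2 H = sym2 Q * sym2 K ∧
    (∀ n m : ℕ, ∃ r : ℝ, ((sym2 P).coeff n).coeff m = (r : Quaternion ℝ)) ∧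
    (∀ n m : ℕ, ∃ r : ℝ, ((sym2 Q).coeff n).coeff m = (r : Quaternion ℝ)) ∧
    (sym2 H).natDegree = 2 * H.natDegree ∧
    (sym2 H).natDegree < (sym2 Q).natDegree ∧
    (sym2 K).natDegree = 2 * K.natDegree ∧
    (sym2 K).natDegree < (sym2 P).natDegree := by
  have hPH : P * H = Q * -K := (eq_neg_of_add_eq_zero_left hrel).trans (mul_neg Q K).symm
  have hsyz : sym2 P * sym2 H = sym2 Q * sym2 K := by
    rw [← sym2_mul, hPH, sym2_mul, sym2_neg]
  refine ⟨hsyz, exists_coeff_coeff_sym2_eq_coe P, exists_coeff_coeff_sym2_eq_coe Q,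
    natDegree_sym2 H, ?_, natDegree_sym2 K, ?_⟩ <;>
  rw [natDegree_sym2, natDegree_sym2] <;> omega

theorem symmetrized_syzygy (P Q H K : Poly2)
    (hH : H ≠ 0) (hK : K ≠ 0)
    (hdH : H.natDegree < Q.natDegree) (hdK : K.natDegree < P.natDegree)
    (hrel : P * H + Q * K = 0) :
    sym2 P * sym2 H = sym2 Q * sym2 K ∧
    (∀ n m : ℕ, ∃ r : ℝ, ((sym2 P).coeff n).coeff m = (r : Quaternion ℝ)) ∧
    (∀ n m : ℕ, ∃ r : ℝ, ((sym2 Q).coeff n).coeff m = (r : Quaternion ℝ)) ∧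
    (sym2 H).natDegree = 2 * H.natDegree ∧
    (sym2 H).natDegree < (sym2 Q).natDegree ∧
    (sym2 K).natDegree = 2 * K.natDegree ∧
    (sym2 K).natDegree < (sym2 P).natDegree :=
  symmetrized_syzygy_general P Q H K hdH hdK hrel
end
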